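/- arXiv:1609.05009 — 4 statements merged into one kernel-verified Lean document; each statement's English description precedes it below -/
import Mathlib

section
/- Fix complex numbers f, h, b with f ≠ 0, and real numbers N0 > 0 and σ. Define Φ : ℂ → ℝ by Φ(w) = 2·Re(conj(f)·(w·h − σ·b)) − (|f·w|²·(N0+|h|²) + σ·|f·b|² − 2σ·|f|²·Re(h·w·conj(b)))/(1+|f|²). Then for every w ∈ ℂ, Φ(w) ≤ Φ(w★), where w★ = conj(h)·(1+|f|² + σ·conj(f)·b)/(conj(f)·(N0+|h|²)); i.e., w★ is a global maximizer of Φ over ℂ. -/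
open Complex Real

/-- The part of the MILB integrand (at a fixed frequency) that depends on the
prefilter value `w`. -/
noncomputable def Phi (f h b : ℂ) (N0 σ : ℝ) (w : ℂ) : ℝ :=
  2 * ((starRingEnd ℂ) f * (w * h - (σ : ℂ) * b)).re -
    (‖f * w‖ ^ 2 * (N0 + ‖h‖ ^ 2) +
      σ * ‖f * b‖ ^ 2 -
      2 * σ * ‖f‖ ^ 2 * (h * w * (starRingEnd ℂ) b).re) /
    (1 + ‖f‖ ^ 2)

open ComplexConjugate

/-!
Completing the square: for `A > 0`, `2 Re(L w) - A |w|² = |L|²/A - |A w - conj L|²/A`, so it is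
maximal at `w = conj L / A`. After clearing the denominator `1 + |f|²`, `Φ` has exactly this shape
with `A = |f|² (N0 + |h|²) / (1 + |f|²)`, and `conj L / A` simplifies to the stated `w★`.
-/

theorem two_mul_re_mul_sub_le (A : ℝ) (hA : 0 < A) (L w : ℂ) :
    2 * (L * w).re - A * ‖w‖ ^ 2 ≤ 2 * (L * (conj L / A)).re - A * ‖conj L / A‖ ^ 2 := by
  have hsq : A * ((2 * (L * (conj L / A)).re - A * ‖conj L / A‖ ^ 2) -
      (2 * (L * w).re - A * ‖w‖ ^ 2)) = normSq (A * w - conj L) := by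
    have := hA.ne'
    simp only [Complex.sq_norm, normSq_apply, mul_re, mul_im, sub_re, sub_im, conj_re, conj_im,
      div_ofReal_re, div_ofReal_im, ofReal_re, ofReal_im]
    field_simp
    ring
  exact sub_nonneg.1 <| (mul_nonneg_iff_of_pos_left hA).1 (hsq ▸ normSq_nonneg _)

namespace Phi

noncomputable def curvature (f h : ℂ) (N0 : ℝ) : ℝ :=
  ‖f‖ ^ 2 * (N0 + ‖h‖ ^ 2) / (1 + ‖f‖ ^ 2)

noncomputable def linearCoeff (f h b : ℂ) (σ : ℝ) : ℂ :=
  conj f * h + ((σ * ‖f‖ ^ 2 / (1 + ‖f‖ ^ 2) : ℝ) : ℂ) * (h * conj b)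

theorem curvature_pos {f : ℂ} (hf : f ≠ 0) (h : ℂ) {N0 : ℝ} (hN0 : 0 < N0) :
    0 < curvature f h N0 := by
  have : 0 < ‖f‖ := norm_pos_iff.2 hf
  unfold curvature
  positivity

theorem eq_quadratic (f h b : ℂ) (N0 σ : ℝ) (w : ℂ) :
    Phi f h b N0 σ w =
      2 * (linearCoeff f h b σ * w).re - curvature f h N0 * ‖w‖ ^ 2 -
        (2 * σ * (conj f * b).re + σ * ‖f * b‖ ^ 2 / (1 + ‖f‖ ^ 2)) := by
  have : (0 : ℝ) < 1 + ‖f‖ ^ 2 := by positivity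
  simp only [Phi, linearCoeff, curvature, Complex.sq_norm, normSq_apply, mul_re, mul_im, sub_re,
    sub_im, add_re, add_im, conj_re, conj_im, ofReal_re, ofReal_im]
  field_simp
  ring

theorem conj_linearCoeff_div_curvature {f : ℂ} (hf : f ≠ 0) (h b : ℂ) {N0 : ℝ} (hN0 : 0 < N0)
    (σ : ℝ) :
    conj (linearCoeff f h b σ) / curvature f h N0 =
      conj h * (1 + (‖f‖ ^ 2 : ℂ) + (σ : ℂ) * conj f * b) /
        (conj f * ((N0 : ℂ) + (‖h‖ ^ 2 : ℂ))) := by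
  have hD : (1 : ℂ) + (‖f‖ ^ 2 : ℂ) ≠ 0 := by
    exact_mod_cast (by positivity : (1 : ℝ) + ‖f‖ ^ 2 ≠ 0)
  have hN : (N0 : ℂ) + (‖h‖ ^ 2 : ℂ) ≠ 0 := by exact_mod_cast (by positivity : N0 + ‖h‖ ^ 2 ≠ 0)
  have hcf : conj f ≠ 0 := (map_ne_zero _).2 hf
  have hnorm : (‖f‖ ^ 2 : ℂ) = f * conj f := by rw [mul_conj, ← Complex.sq_norm]; push_cast; rfl
  simp only [linearCoeff, curvature, map_add, map_mul, conj_conj, conj_ofReal]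
  push_cast
  rw [hnorm] at hD ⊢
  field_simp

end Phi

/-- The optimal prefilter value `w★` is a global maximizer of `Φ` over `ℂ`. -/
theorem stmt0 (f h b : ℂ) (hf : f ≠ 0) (N0 σ : ℝ) (hN0 : 0 < N0) :
    ∀ w : ℂ,
      Phi f h b N0 σ w ≤
        Phi f h b N0 σ
          ((starRingEnd ℂ) h * (1 + (‖f‖ ^ 2 : ℂ) + (σ : ℂ) * (starRingEnd ℂ) f * b) /
            ((starRingEnd ℂ) f * ((N0 : ℂ) + (‖h‖ ^ 2 : ℂ)))) := by
  intro w
  rw [← Phi.conj_linearCoeff_div_curvature hf h b hN0 σ, Phi.eq_quadratic, Phi.eq_quadratic]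
  linarith [two_mul_re_mul_sub_le _ (Phi.curvature_pos hf h hN0) (Phi.linearCoeff f h b σ) w]
end

section
/- Fix complex numbers f, h, b with f ≠ 0, and reals N0 > 0 and σ. Let m = −N0/(N0+|h|²), m̃ = σ²·(1+m) − σ, and w★ = conj(h)·(1+|f|² + σ·conj(f)·b)/(conj(f)·(N0+|h|²)). Then the following identity holds: log(1+|f|²) − |f|² − (|f·w★|²·(N0+|h|²) + σ·|f·b|² − 2σ·|f|²·Re(h·w★·conj(b)))/(1+|f|²) + 2·Re(conj(f)·(w★·h − σ·b)) = 1 + log(1+|f|²) + m·(1+|f|²) + m̃·|f·b|²/(1+|f|²) + 2σ·m·Re(conj(f)·b). -/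
open Complex ComplexConjugate

/-!
Writing `g = conj f * b` and `D = N0 + ‖h‖²`, the optimal prefilter satisfies
`conj f * w★ = conj h * (1 + ‖f‖² + σ g) / D`. Each of the three `w★`-terms of the integrand
becomes `‖h‖² / D` times a quadratic expression in `1 + ‖f‖²`, `σ`, `Re g` and `‖g‖²`, and the
identity reduces to `m = ‖h‖² / D - 1`.
-/

namespace OptimalPrefilter

theorem norm_ofReal_add_ofReal_mul_sq (a σ : ℝ) (g : ℂ) :
    ‖(a + σ * g : ℂ)‖ ^ 2 = a ^ 2 + 2 * σ * a * g.re + σ ^ 2 * ‖g‖ ^ 2 := by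
  simp only [Complex.sq_norm, normSq_apply, add_re, ofReal_re, mul_re, ofReal_im, zero_mul,
    sub_zero, add_im, mul_im, add_zero, zero_add]
  ring

theorem re_ofReal_add_ofReal_mul_mul_conj (a σ : ℝ) (g : ℂ) :
    ((a + σ * g : ℂ) * conj g).re = a * g.re + σ * ‖g‖ ^ 2 := by
  rw [add_mul, mul_assoc, Complex.mul_conj', add_re, re_ofReal_mul, conj_re, ← ofReal_pow,
    re_ofReal_mul, ofReal_re]

theorem re_ofReal_add_ofReal_mul (a σ : ℝ) (g : ℂ) : (a + σ * g : ℂ).re = a + σ * g.re := by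
  rw [add_re, ofReal_re, re_ofReal_mul]

variable {f h w b X : ℂ} {D : ℝ}

theorem norm_mul_sq_mul_of_conj_mul_eq (hD : D ≠ 0) (hw : conj f * w = conj h * X / D) :
    ‖f * w‖ ^ 2 * D = ‖h‖ ^ 2 * ‖X‖ ^ 2 / D := by
  have hnorm : ‖f * w‖ = ‖h‖ * ‖X‖ / |D| := by
    rw [norm_mul, ← Complex.norm_conj f, ← norm_mul, hw, norm_div, norm_mul, Complex.norm_conj,
      Complex.norm_real, Real.norm_eq_abs]
  rw [hnorm, div_pow, sq_abs]
  field_simp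

theorem re_mul_mul_conj_of_conj_mul_eq (hf : f ≠ 0) (hw : conj f * w = conj h * X / D) :
    (h * w * conj b).re = ‖h‖ ^ 2 * (X * conj (conj f * b)).re / (D * ‖f‖ ^ 2) := by
  have hf2 : (‖f‖ ^ 2 : ℂ) ≠ 0 := by simpa using hf
  have hcomplex : h * w * conj b =
      ((‖h‖ ^ 2 / (D * ‖f‖ ^ 2) : ℝ) : ℂ) * (X * conj (conj f * b)) := calc
    h * w * conj b = h * (conj f * w) * (f * conj b) / (‖f‖ ^ 2 : ℂ) := by
      have hf' : conj f ≠ 0 := by simpa using hf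
      rw [← Complex.conj_mul']
      field_simp
    _ = _ := by
      rw [hw]
      push_cast
      rw [← Complex.mul_conj' h, map_mul, Complex.conj_conj]
      ring
  rw [hcomplex, Complex.re_ofReal_mul]
  ring

theorem re_conj_mul_sub_of_conj_mul_eq (σ : ℝ) (hw : conj f * w = conj h * X / D) :
    (conj f * (w * h - σ * b)).re = ‖h‖ ^ 2 * X.re / D - σ * (conj f * b).re := by
  have hcomplex : conj f * (w * h - σ * b) =
      ((‖h‖ ^ 2 / D : ℝ) : ℂ) * X - σ * (conj f * b) := by
    rw [mul_sub, ← mul_assoc, hw]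
    push_cast
    rw [← Complex.mul_conj' h]
    ring
  rw [hcomplex, Complex.sub_re, Complex.re_ofReal_mul, Complex.re_ofReal_mul]
  ring

end OptimalPrefilter

/-- Per-frequency substitution of the optimal prefilter `w★` into the MILB integrand
(equation (A.2) of the paper, at a fixed frequency). -/
theorem stmt2 (f h b : ℂ) (hf : f ≠ 0) (N0 σ : ℝ) (hN0 : 0 < N0) :
    let m : ℝ := -N0 / (N0 + ‖h‖ ^ 2)
    let mt : ℝ := σ ^ 2 * (1 + m) - σ
    let wstar : ℂ :=
      (starRingEnd ℂ) h * (1 + (‖f‖ ^ 2 : ℂ) + (σ : ℂ) * (starRingEnd ℂ) f * b) /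
        ((starRingEnd ℂ) f * ((N0 : ℂ) + (‖h‖ ^ 2 : ℂ)))
    Real.log (1 + ‖f‖ ^ 2) - ‖f‖ ^ 2 -
        (‖f * wstar‖ ^ 2 * (N0 + ‖h‖ ^ 2) +
            σ * ‖f * b‖ ^ 2 -
            2 * σ * ‖f‖ ^ 2 * (h * wstar * (starRingEnd ℂ) b).re) /
          (1 + ‖f‖ ^ 2) +
        2 * ((starRingEnd ℂ) f * (wstar * h - (σ : ℂ) * b)).re =
      1 + Real.log (1 + ‖f‖ ^ 2) + m * (1 + ‖f‖ ^ 2) +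
        mt * ‖f * b‖ ^ 2 / (1 + ‖f‖ ^ 2) +
        2 * σ * m * ((starRingEnd ℂ) f * b).re := by
  intro m mt wstar
  set g := conj f * b
  set X : ℂ := ((1 + ‖f‖ ^ 2 : ℝ) : ℂ) + σ * g
  have hD : N0 + ‖h‖ ^ 2 ≠ 0 := by positivity
  have hw : conj f * wstar = conj h * X / ((N0 + ‖h‖ ^ 2 : ℝ) : ℂ) := by
    have hf' : conj f ≠ 0 := by simpa using hf
    simp only [wstar, X, g]
    push_cast
    field_simp
  have hfb : ‖f * b‖ = ‖g‖ := by rw [norm_mul, norm_mul, Complex.norm_conj]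
  rw [OptimalPrefilter.norm_mul_sq_mul_of_conj_mul_eq hD hw,
    OptimalPrefilter.re_mul_mul_conj_of_conj_mul_eq hf hw,
    OptimalPrefilter.re_conj_mul_sub_of_conj_mul_eq σ hw,
    OptimalPrefilter.norm_ofReal_add_ofReal_mul_sq,
    OptimalPrefilter.re_ofReal_add_ofReal_mul_mul_conj,
    OptimalPrefilter.re_ofReal_add_ofReal_mul, hfb]
  simp only [m, mt]
  field_simp
  ring
end

section
/- Let H : [−π,π] → ℂ be measurable, N0 > 0, and M(ω) = −N0/(N0+|H(ω)|²). Let G₀ : [−π,π] → ℝ be measurable with 1+G₀(ω) > 0 for almost every ω, and suppose that log(1+G₀), M·(1+G₀), and log(1+|H|²/N0) are integrable on [−π,π], and that (1/2π)∫_{−π}^{π} M(ω)·(1+G₀(ω)) dω = −1. Then (1/2π)∫_{−π}^{π} log(1+G₀(ω)) dω ≤ (1/2π)∫_{−π}^{π} log(1+|H(ω)|²/N0) dω. -/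
open Complex Real MeasureTheory

/-!
Write `1 + G₀ = (1 + |H|²/N0) · F` with `F = N0 (1 + G₀) / (N0 + |H|²) = -M (1 + G₀)`.
The normalization says that `F` has mean one over `[-π, π]`, and `log F ≤ F - 1` then shows that
the mean of `log (1 + G₀)` exceeds that of `log (1 + |H|²/N0)` by at most `mean F - 1 = 0`.
-/

lemma Real.log_le_log_add_div_sub_one {u w : ℝ} (hu : 0 < u) (hw : 0 < w) :
    Real.log u ≤ Real.log w + (u / w - 1) := by
  have hdiv : 0 < u / w := div_pos hu hw
  calc Real.log u = Real.log w + Real.log (u / w) := by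
        rw [← Real.log_mul hw.ne' hdiv.ne', mul_div_cancel₀ u hw.ne']
    _ ≤ Real.log w + (u / w - 1) := by gcongr; exact Real.log_le_sub_one_of_pos hdiv

theorem MeasureTheory.integral_log_le_integral_log_of_integral_div_eq
    {α : Type*} [MeasurableSpace α] {μ : Measure α} [IsFiniteMeasure μ] {u w : α → ℝ}
    (hu : ∀ᵐ x ∂μ, 0 < u x) (hw : ∀ᵐ x ∂μ, 0 < w x)
    (hlogu : Integrable (fun x => Real.log (u x)) μ)
    (hlogw : Integrable (fun x => Real.log (w x)) μ)
    (hdiv : Integrable (fun x => u x / w x) μ) (hmean : ∫ x, u x / w x ∂μ = μ.real Set.univ) :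
    ∫ x, Real.log (u x) ∂μ ≤ ∫ x, Real.log (w x) ∂μ := by
  have hslack : Integrable (fun x => u x / w x - 1) μ := hdiv.sub (integrable_const 1)
  have hbound : ∀ᵐ x ∂μ, Real.log (u x) ≤ Real.log (w x) + (u x / w x - 1) := by
    filter_upwards [hu, hw] with x hux hwx
    exact Real.log_le_log_add_div_sub_one hux hwx
  calc ∫ x, Real.log (u x) ∂μ ≤ ∫ x, Real.log (w x) + (u x / w x - 1) ∂μ :=
        integral_mono_ae hlogu (hlogw.add hslack) hbound
    _ = ∫ x, Real.log (w x) ∂μ := by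
        rw [integral_add hlogw hslack, integral_sub hdiv (integrable_const 1), hmean,
          integral_const, smul_eq_mul, mul_one, sub_self, add_zero]

theorem stmt8_general (H : ℝ → ℂ) (N0 : ℝ) (hN0 : 0 < N0)
    (G0 : ℝ → ℝ)
    (hpos : ∀ᵐ ω ∂(volume.restrict (Set.Icc (-π) π)), 0 < 1 + G0 ω)
    (hint1 : IntegrableOn (fun ω => Real.log (1 + G0 ω)) (Set.Icc (-π) π))
    (hint2 : IntegrableOn
      (fun ω => (-N0 / (N0 + ‖H ω‖ ^ 2)) * (1 + G0 ω)) (Set.Icc (-π) π))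
    (hint3 : IntegrableOn
      (fun ω => Real.log (1 + ‖H ω‖ ^ 2 / N0)) (Set.Icc (-π) π))
    (hnorm : (1 / (2 * π)) *
        ∫ ω in (-π)..π, (-N0 / (N0 + ‖H ω‖ ^ 2)) * (1 + G0 ω) = -1) :
    (1 / (2 * π)) * ∫ ω in (-π)..π, Real.log (1 + G0 ω) ≤
      (1 / (2 * π)) * ∫ ω in (-π)..π, Real.log (1 + ‖H ω‖ ^ 2 / N0) := by
  have hle : -π ≤ π := by linarith [pi_pos]
  have hsub : Set.Ioc (-π) π ⊆ Set.Icc (-π) π := Set.Ioc_subset_Icc_self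
  have hratio : ∀ ω, (1 + G0 ω) / (1 + ‖H ω‖ ^ 2 / N0) =
      -((-N0 / (N0 + ‖H ω‖ ^ 2)) * (1 + G0 ω)) := fun ω => by
    have : 0 < N0 + ‖H ω‖ ^ 2 := by positivity
    field_simp
  simp only [intervalIntegral.integral_of_le hle] at hnorm ⊢
  refine mul_le_mul_of_nonneg_left ?_ (by positivity)
  refine integral_log_le_integral_log_of_integral_div_eq (ae_restrict_of_ae_restrict_of_subset
    hsub hpos) (ae_of_all _ fun ω => by positivity) (hint1.mono_set hsub)
    (hint3.mono_set hsub) ?_ ?_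
  · simp_rw [hratio]
    exact (hint2.mono_set hsub).neg
  · rw [measureReal_restrict_apply_univ, volume_real_Ioc_of_le hle]
    simp only [hratio, integral_neg]
    rw [one_div_mul_eq_div, div_eq_iff (by positivity)] at hnorm
    linarith

/-- Jensen step in the proof of Property 2: the Ungerboeck rate at a normalized
target response is at most the Shannon capacity of the ISI channel. -/
theorem stmt8 (H : ℝ → ℂ) (hHmeas : Measurable H) (N0 : ℝ) (hN0 : 0 < N0)
    (G0 : ℝ → ℝ) (hG0meas : Measurable G0)
    (hpos : ∀ᵐ ω ∂(volume.restrict (Set.Icc (-π) π)), 0 < 1 + G0 ω)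
    (hint1 : IntegrableOn (fun ω => Real.log (1 + G0 ω)) (Set.Icc (-π) π))
    (hint2 : IntegrableOn
      (fun ω => (-N0 / (N0 + ‖H ω‖ ^ 2)) * (1 + G0 ω)) (Set.Icc (-π) π))
    (hint3 : IntegrableOn
      (fun ω => Real.log (1 + ‖H ω‖ ^ 2 / N0)) (Set.Icc (-π) π))
    (hnorm : (1 / (2 * π)) *
        ∫ ω in (-π)..π, (-N0 / (N0 + ‖H ω‖ ^ 2)) * (1 + G0 ω) = -1) :
    (1 / (2 * π)) * ∫ ω in (-π)..π, Real.log (1 + G0 ω) ≤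
      (1 / (2 * π)) * ∫ ω in (-π)..π, Real.log (1 + ‖H ω‖ ^ 2 / N0) :=
  stmt8_general H N0 hN0 G0 hpos hint1 hint2 hint3 hnorm
end

section
/- Let w, h, f, b be complex numbers and N0 > 0 a real number, and assume |w|²·N0 = 1 and w·h = f + b. Then log(1+|f|²) − |f|² − (|f·w|²·(N0+|h|²) + |f·b|² − 2·|f|²·Re(h·w·conj(b)))/(1+|f|²) + 2·Re(conj(f)·(w·h − b)) = log(1+|f|²). -/
open Complex Real
open scoped ComplexConjugate

/-! Substituting `w * h = f + b` and `‖w‖² N0 = 1`, the fraction's numerator factors as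
`‖f‖² (1 + ‖f‖²)` because `‖f + b‖² + ‖b‖² - 2 Re((f + b) b̄) = ‖f‖²`, so the fraction is `‖f‖²`;
the last term is `2 Re(f̄ f) = 2 ‖f‖²`, and the three `‖f‖²` contributions cancel. -/

theorem norm_sq_mul_add_sub_re_mul_conj (w h f b : ℂ) (N0 : ℝ) :
    ‖f * w‖ ^ 2 * (N0 + ‖h‖ ^ 2) + ‖f * b‖ ^ 2 - 2 * ‖f‖ ^ 2 * (h * w * conj b).re =
      ‖f‖ ^ 2 * (‖w‖ ^ 2 * N0 + ‖w * h - b‖ ^ 2) := by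
  have hcross : ‖w * h - b‖ ^ 2 = ‖w‖ ^ 2 * ‖h‖ ^ 2 + ‖b‖ ^ 2 - 2 * (h * w * conj b).re := by
    rw [Complex.sq_norm, normSq_sub, ← Complex.sq_norm, ← Complex.sq_norm, norm_mul, mul_pow,
      mul_comm w h]
  rw [hcross, norm_mul, norm_mul]
  ring

theorem stmt12_general (w h f b : ℂ) (N0 : ℝ)
    (hw : ‖w‖ ^ 2 * N0 = 1) (hdec : w * h = f + b) :
    Real.log (1 + ‖f‖ ^ 2) - ‖f‖ ^ 2 -
        (‖f * w‖ ^ 2 * (N0 + ‖h‖ ^ 2) +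
            ‖f * b‖ ^ 2 -
            2 * ‖f‖ ^ 2 * (h * w * (starRingEnd ℂ) b).re) /
          (1 + ‖f‖ ^ 2) +
        2 * ((starRingEnd ℂ) f * (w * h - b)).re =
      Real.log (1 + ‖f‖ ^ 2) := by
  have hfb : w * h - b = f := by rw [hdec, add_sub_cancel_right]
  have hfrac : (‖f * w‖ ^ 2 * (N0 + ‖h‖ ^ 2) + ‖f * b‖ ^ 2 -
      2 * ‖f‖ ^ 2 * (h * w * conj b).re) / (1 + ‖f‖ ^ 2) = ‖f‖ ^ 2 := by
    rw [norm_sq_mul_add_sub_re_mul_conj, hw, hfb, mul_div_assoc, div_self (by positivity), mul_one]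
  have hlast : (conj f * (w * h - b)).re = ‖f‖ ^ 2 := by
    rw [hfb, conj_mul', ← ofReal_pow, ofReal_re]
  rw [hfrac, hlast]
  ring

/-- Per-frequency computation behind Property 3: with an all-pass noise-whitening
prefilter value `w` (`|w|² N0 = 1`) and the decomposition `w·h = f + b`, the σ = 1
Forney-model MILB integrand reduces to `log(1+|f|²)`. -/
theorem stmt12 (w h f b : ℂ) (N0 : ℝ) (hN0 : 0 < N0)
    (hw : ‖w‖ ^ 2 * N0 = 1) (hdec : w * h = f + b) :
    Real.log (1 + ‖f‖ ^ 2) - ‖f‖ ^ 2 -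
        (‖f * w‖ ^ 2 * (N0 + ‖h‖ ^ 2) +
            ‖f * b‖ ^ 2 -
            2 * ‖f‖ ^ 2 * (h * w * (starRingEnd ℂ) b).re) /
          (1 + ‖f‖ ^ 2) +
        2 * ((starRingEnd ℂ) f * (w * h - b)).re =
      Real.log (1 + ‖f‖ ^ 2) :=
  stmt12_general w h f b N0 hw hdec
end
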